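/- arXiv:math/9812115 — 2 statements merged into one kernel-verified Lean document; each statement's English description precedes it below -/
import Mathlib

section
/- Let T be an Aronszajn tree (in which every node has ℵ₀ many immediate successors). Then every condition of the poset S₂(T) can be extended to any countable height: for every f ∈ S₂(T) with dom f = T↾(α+1) and every β with α ≤ β < ω₁ there is g ∈ S₂(T) with f ⊆ g and dom g = T↾(β+1). -/
noncomputable section

open Cardinal Set

/-- The first uncountable ordinal. -/
def omega1 : Ordinal.{0} := (Cardinal.aleph 1).ord

universe u v w

/-- A carrier together with a strict order relation and a level function. -/
structure PreTree (α : Type u) where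
  lt : α → α → Prop
  lev : α → Ordinal.{u_1}

namespace PreTree

variable {α : Type u}

/-- reflexive closure of the tree order -/
def le (T : PreTree α) (x y : α) : Prop := x = y ∨ T.lt x y

/-- tree axioms: the relation is transitive, the level function is strictly increasing,
the predecessors of any node are linearly ordered and there is exactly one predecessor
at each smaller level (so the predecessors are well-ordered of order type `lev x`). -/
def IsTree (T : PreTree α) : Prop :=
  (∀ x y z, T.lt x y → T.lt y z → T.lt x z) ∧
  (∀ x y, T.lt x y → T.lev x < T.lev y) ∧
  (∀ x y z, T.lt y x → T.lt z x → y = z ∨ T.lt y z ∨ T.lt z y) ∧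
  (∀ x o, o < T.lev x → ∃! y, T.lt y x ∧ T.lev y = o)

/-- an ω₁-tree: height ω₁, countable nonempty levels, each node has ℵ₀ many
immediate successors and extensions in every higher level below ω₁. -/
def IsOmega1Tree (T : PreTree α) : Prop :=
  T.IsTree ∧
  (∀ x, T.lev x < omega1) ∧
  (∀ o, o < omega1 → {x | T.lev x = o}.Countable) ∧
  (∀ o, o < omega1 → ∃ x, T.lev x = o) ∧
  (∀ x, {y | T.lt x y ∧ T.lev y = T.lev x + 1}.Infinite) ∧
  (∀ x o, T.lev x < o → o < omega1 → ∃ y, T.lt x y ∧ T.lev y = o)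

def IsAntichain' (T : PreTree α) (s : Set α) : Prop :=
  ∀ x ∈ s, ∀ y ∈ s, x ≠ y → ¬ T.lt x y ∧ ¬ T.lt y x

def IsChain' (T : PreTree α) (s : Set α) : Prop :=
  ∀ x ∈ s, ∀ y ∈ s, x = y ∨ T.lt x y ∨ T.lt y x

/-- a Suslin tree: an ω₁-tree with no uncountable antichain -/
def Suslin (T : PreTree α) : Prop :=
  T.IsOmega1Tree ∧ ∀ s : Set α, T.IsAntichain' s → s.Countable

/-- an Aronszajn tree: an ω₁-tree with no uncountable chain -/
def Aronszajn (T : PreTree α) : Prop :=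
  T.IsOmega1Tree ∧ ∀ s : Set α, T.IsChain' s → s.Countable

/-- a special tree: there is an order preserving map into ℚ -/
def Special (T : PreTree α) : Prop :=
  ∃ f : α → ℚ, ∀ x y, T.lt x y → f x < f y

end PreTree

/-- the carrier of the product of a family of trees: tuples of nodes of a common level -/
abbrev ProdCarrier {ι : Type u} {β : ι → Type v} (A : ∀ i, PreTree (β i)) : Type (max u v) :=
  {f : ∀ i, β i // ∃ o, ∀ i, (A i).lev (f i) = o}

/-- the product of a family of trees, ordered coordinatewise -/
def prodTree {ι : Type u} {β : ι → Type v} (A : ∀ i, PreTree (β i)) :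
    PreTree (ProdCarrier A) where
  lt f g := ∀ i, (A i).lt (f.1 i) (g.1 i)
  lev f := ⨆ i, (A i).lev (f.1 i)

/-- the carrier of the product of two trees -/
abbrev ProdCarrier₂ {α : Type u} {β : Type v} (A : PreTree α) (B : PreTree β) : Type (max u v) :=
  {p : α × β // A.lev p.1 = B.lev p.2}

/-- the product of two trees -/
def prodTree₂ {α : Type u} {β : Type v} (A : PreTree α) (B : PreTree β) :
    PreTree (ProdCarrier₂ A B) where
  lt p q := A.lt p.1.1 q.1.1 ∧ B.lt p.1.2 q.1.2
  lev p := A.lev p.1.1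

abbrev ConeCarrier {α : Type u} (T : PreTree α) (a : α) : Type u := {x : α // x = a ∨ T.lt a x}

/-- the subtree `T_a` of all extensions of `a`, with levels shifted to start at `0` -/
def cone {α : Type u} (T : PreTree α) (a : α) : PreTree (ConeCarrier T a) where
  lt x y := T.lt x.1 y.1
  lev x := T.lev x.1 - T.lev a

/-- the derived tree determined by a tuple of (distinct, same-level) nodes:
the product of the cones above the nodes -/
def derivedTree {α : Type u} (T : PreTree α) {n : ℕ} (a : Fin (n+1) → α) :
    PreTree (ProdCarrier (fun i => cone T (a i))) :=
  prodTree (fun i => cone T (a i))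

/-- every derived tree of `T` is a Suslin tree -/
def AllDerivedSuslin {α : Type u} (T : PreTree α) : Prop :=
  ∀ (n : ℕ) (a : Fin (n+1) → α), Function.Injective a →
    (∀ i, T.lev (a i) = T.lev (a 0)) → (derivedTree T a).Suslin

/-- carrier of the disjoint union of the trees with indices in the finite set `d` -/
abbrev UnionCarrier {I : Type u} (β : I → Type v) (d : Finset I) : Type (max u v) :=
  {p : Sigma β // p.1 ∈ d}

/-- the disjoint union of the trees with indices in `d` -/
def unionTree {I : Type u} {β : I → Type v} (A : ∀ ζ, PreTree (β ζ)) (d : Finset I) :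
    PreTree (UnionCarrier β d) where
  lt x y := ∃ h : x.1.1 = y.1.1, (A y.1.1).lt (cast (congrArg β h) x.1.2) y.1.2
  lev x := (A x.1.1).lev x.1.2

/-! clubs, stationary sets and the diamond principle on ω₁ -/

/-- `C` is a closed unbounded subset of ω₁ -/
def IsClubO1 (C : Set Ordinal) : Prop :=
  (∀ c ∈ C, c < omega1) ∧
  (∀ o, o < omega1 → ∃ c ∈ C, o ≤ c) ∧
  (∀ o, o < omega1 → o ≠ 0 → (∀ b, o ≠ b + 1) →
    (∀ b, b < o → ∃ c ∈ C, b ≤ c ∧ c < o) → o ∈ C)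

/-- `S` is stationary in ω₁ -/
def StationaryO1 (S : Set Ordinal) : Prop :=
  ∀ C, IsClubO1 C → (S ∩ C).Nonempty

/-- the diamond principle ◇ on ω₁ -/
def DiamondO1 : Prop :=
  ∃ S : Ordinal → Set Ordinal,
    (∀ ξ, S ξ ⊆ Set.Iio ξ) ∧
    ∀ X : Set Ordinal, X ⊆ Set.Iio omega1 →
      StationaryO1 {ξ | ξ < omega1 ∧ X ∩ Set.Iio ξ = S ξ}

/-! ω₁-like orders, parity, patterns -/

/-- `j` is the immediate successor of `i` -/
def ISucc {I : Type u} [LinearOrder I] (i j : I) : Prop :=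
  i < j ∧ ∀ k, i < k → j ≤ k

/-- `j` is the `n`-th iterated immediate successor of `i` -/
def IterSucc {I : Type u} [LinearOrder I] : ℕ → I → I → Prop
  | 0, i, j => i = j
  | n+1, i, j => ∃ k, IterSucc n i k ∧ ISucc k j

/-- `i` is a limit point: not an immediate successor (least elements count as limits) -/
def ILimit {I : Type u} [LinearOrder I] (i : I) : Prop := ¬ ∃ j, ISucc j i

/-- `i` is even: of the form `δ + n` with `δ` a limit and `n` even -/
def IEven {I : Type u} [LinearOrder I] (i : I) : Prop :=
  ∃ (δ : I) (n : ℕ), ILimit δ ∧ Even n ∧ IterSucc n δ i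

/-- `i` is odd: of the form `δ + n` with `δ` a limit and `n` odd -/
def IOdd {I : Type u} [LinearOrder I] (i : I) : Prop :=
  ∃ (δ : I) (n : ℕ), ILimit δ ∧ Odd n ∧ IterSucc n δ i

/-- an ω₁-like order: uncountable, proper initial segments countable,
with a least element, and every element has an immediate successor -/
def IsOmega1Like (I : Type u) [LinearOrder I] : Prop :=
  ¬ (Set.univ : Set I).Countable ∧
  (∀ i : I, {j | j < i}.Countable) ∧
  (∃ b : I, ∀ i, b ≤ i) ∧
  (∀ i : I, ∃ j, ISucc i j)

/-- the initial segment below `δ` is well-ordered, of order type `ot` -/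
def SegType {I : Type u} [LinearOrder I] (δ : I) (ot : Ordinal.{0}) : Prop :=
  ∃ h : IsWellOrder {j : I // j < δ} (fun a b => a < b),
    @Ordinal.type {j : I // j < δ} (fun a b => a < b) h = Ordinal.lift.{u, 0} ot

open Classical in
/-- the finite set `{a, b, c, d}` -/
def quadF {I : Type u} (a b c d : I) : Finset I := {a, b, c, d}

/-- a pattern over `I`: `sp` consists of nonempty finite subsets of `I` closed under
supersets, and `su` is its complement among the nonempty finite subsets -/
def IsPatternI {I : Type u} (su sp : Set (Finset I)) : Prop :=
  (∀ e ∈ sp, e.Nonempty) ∧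
  (∀ e ∈ sp, ∀ e' : Finset I, e ⊆ e' → e' ∈ sp) ∧
  su = {e | e.Nonempty ∧ e ∉ sp}

/-- `E` assigns to each countable limit ordinal `δ ≠ 0` a canonical code `E δ ⊆ ω`
of a well-order of ω of order type `δ` -/
def GoodCodes (E : Ordinal → Set ℕ) : Prop :=
  E 0 = ∅ ∧
  ∀ δ : Ordinal, δ < omega1 → δ ≠ 0 → (∀ b, δ ≠ b + 1) →
    ∃ (r : ℕ → ℕ → Prop) (h : IsWellOrder ℕ r),
      @Ordinal.type ℕ r h = δ ∧ E δ = {m | ∃ a b, r a b ∧ m = Nat.pair a b}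

/-- a simple pattern: the pattern respects the "simplicity table" -/
def IsSimplePatternI {I : Type u} [LinearOrder I] (E : Ordinal → Set ℕ)
    (su sp : Set (Finset I)) : Prop :=
  IsPatternI su sp ∧
  -- Suslin column: all triples, pairs and singletons
  (∀ e : Finset I, e.Nonempty → e.card ≤ 3 → e ∈ su) ∧
  -- Suslin column: quadruples
  (∀ ζ₁ ζ₂ ζ₃ ζ₄ : I, ζ₁ < ζ₂ → ζ₂ < ζ₃ → ζ₃ < ζ₄ →
    ((IEven ζ₁ ∧ IEven ζ₂ ∧ IEven ζ₃ ∧ IEven ζ₄) ∨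
     (IOdd ζ₁ ∧ IOdd ζ₂ ∧ IOdd ζ₃ ∧ IOdd ζ₄) ∨
     (IOdd ζ₁ ∧ IEven ζ₂ ∧ IOdd ζ₃ ∧ IEven ζ₄) ∨
     (IOdd ζ₁ ∧ IEven ζ₂ ∧ IEven ζ₃ ∧ IOdd ζ₄) ∨
     (ILimit ζ₁ ∧ IEven ζ₂ ∧ IOdd ζ₃ ∧ IOdd ζ₄) ∨
     (ISucc ζ₁ ζ₂ ∧ IOdd ζ₃ ∧ IOdd ζ₄)) →
    quadF ζ₁ ζ₂ ζ₃ ζ₄ ∈ su) ∧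
  (∀ (δ : I) (ot : Ordinal) (i : ℕ) (x1 x3 x4 xi : I),
    ILimit δ → SegType δ ot →
    IterSucc 1 δ x1 → IterSucc 3 δ x3 → IterSucc 4 δ x4 → IterSucc (5+i) δ xi →
    i ∈ E ot → quadF x1 x3 x4 xi ∈ su) ∧
  -- special column: all quintuples (and larger sets)
  (∀ e : Finset I, 5 ≤ e.card → e ∈ sp) ∧
  -- special column: quadruples
  (∀ ζ₁ ζ₂ ζ₃ ζ₄ : I, ζ₁ < ζ₂ → ζ₂ < ζ₃ → ζ₃ < ζ₄ →
    ((IEven ζ₁ ∧ IOdd ζ₂ ∧ IEven ζ₃ ∧ IOdd ζ₄) ∨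
     (IOdd ζ₁ ∧ IEven ζ₂ ∧ IEven ζ₃ ∧ IEven ζ₄) ∨
     (IEven ζ₁ ∧ ¬ ILimit ζ₁ ∧ IEven ζ₂ ∧ IOdd ζ₃ ∧ IOdd ζ₄) ∨
     (((IEven ζ₁ ∧ IOdd ζ₂) ∨ (IOdd ζ₁ ∧ IEven ζ₂)) ∧ ¬ ISucc ζ₁ ζ₂ ∧ IOdd ζ₃ ∧ IOdd ζ₄)) →
    quadF ζ₁ ζ₂ ζ₃ ζ₄ ∈ sp) ∧
  (∀ (δ : I) (ot : Ordinal) (i : ℕ) (x1 x3 x4 xi : I),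
    ILimit δ → SegType δ ot →
    IterSucc 1 δ x1 → IterSucc 3 δ x3 → IterSucc 4 δ x4 → IterSucc (5+i) δ xi →
    i ∉ E ot → quadF x1 x3 x4 xi ∈ sp)

/-- the ordinals below ω₁, as a linear order -/
abbrev O1 : Type 1 := {o : Ordinal // o < omega1}

theorem nat_lt_omega1 (n : ℕ) : (n : Ordinal) < omega1 := by
  have h1 : (n : Ordinal) < Ordinal.omega0 := Ordinal.nat_lt_omega0 n
  have h2 : Ordinal.omega0 ≤ omega1 := by
    rw [← Cardinal.ord_aleph0]
    exact Cardinal.ord_le_ord.mpr (Cardinal.aleph0_le_aleph 1)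
  exact h1.trans_le h2

/-- the natural number `n` as an element of `O1` -/
def o1 (n : ℕ) : O1 := ⟨(n : Ordinal), nat_lt_omega1 n⟩

/-- the sequence of trees realizes the pattern `(su, sp)`: for `d ∈ su` the disjoint
union `T^d` and all of its derived trees are Suslin, and for `d ∈ sp` the full
product `T^(d)` is special -/
def HasPattern {I : Type u} {β : I → Type v} (A : ∀ ζ, PreTree (β ζ))
    (su sp : Set (Finset I)) : Prop :=
  (∀ d ∈ su, (unionTree A d).Suslin ∧ AllDerivedSuslin (unionTree A d)) ∧
  (∀ d ∈ sp, (prodTree (fun ζ : {x // x ∈ d} => A ζ.1)).Special)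

/-- a club-embedding of `A` into `B`: a level-preserving order-embedding defined on
the restriction of `A` to a club set of levels -/
def ClubEmbeds {α : Type u} {β : Type v} (A : PreTree α) (B : PreTree β) : Prop :=
  ∃ C : Set Ordinal, IsClubO1 C ∧
    ∃ h : {x : α // A.lev x ∈ C} → β,
      Function.Injective h ∧
      (∀ x, B.lev (h x) = A.lev x.1) ∧
      (∀ x y, A.lt x.1 y.1 ↔ B.lt (h x) (h y))

/-- the collection `{T^d : d ∈ su}` is primal: every derived tree of every member is
Suslin, and every Suslin tree contains a club-embedded copy of a derived tree of a member -/
def Primal {I : Type u} {β : I → Type v} (A : ∀ ζ, PreTree (β ζ)) (su : Set (Finset I)) : Prop :=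
  (∀ d ∈ su, (unionTree A d).Suslin ∧ AllDerivedSuslin (unionTree A d)) ∧
  ∀ (γ : Type w) (S : PreTree γ), S.Suslin →
    ∃ d ∈ su, ∃ (n : ℕ) (a : Fin (n+1) → UnionCarrier β d),
      Function.Injective a ∧
      (∀ i, (unionTree A d).lev (a i) = (unionTree A d).lev (a 0)) ∧
      ClubEmbeds (derivedTree (unionTree A d) a) S

/-! the specializing poset S(T) -/

/-- domain of a partial function into ℚ -/
def pdom {α : Type u} (h : α → Option ℚ) : Set α := {x | h x ≠ none}

/-- the finite function `h` (living on level ≥ a) bounds the approximation `f`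
(with `last f = a`): on each point of its domain it is strictly above the value of `f`
at the unique level-`a` restriction of the point -/
def Bounds {α : Type u} (T : PreTree α) (a : Ordinal) (f h : α → Option ℚ) : Prop :=
  ∀ x q, h x = some q → ∃ y r, T.le y x ∧ T.lev y = a ∧ f y = some r ∧ r < q

/-- a requirement of height `γ` and arity `n` -/
def IsRequirement {α : Type u} (T : PreTree α) (γ : Ordinal) (n : ℕ)
    (H : Set (α → Option ℚ)) : Prop :=
  ∀ h ∈ H, (pdom h).Finite ∧ (pdom h).ncard = n ∧ ∀ x ∈ pdom h, T.lev x = γ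

/-- the requirement `H` of height `γ` is dispersed -/
def DispersedReq {α : Type u} (T : PreTree α) (γ : Ordinal) (H : Set (α → Option ℚ)) : Prop :=
  ∀ t : Set α, t.Finite → t ⊆ {x | T.lev x = γ} → ∃ h ∈ H, ∀ x ∈ t, h x = none

/-- `h'` is the restriction `h↾γ` of the finite function `h` to level `γ`:
`h'(x↾γ) = h(x)` -/
def IsRestrictTo {α : Type u} (T : PreTree α) (γ : Ordinal) (h h' : α → Option ℚ) : Prop :=
  (∀ y, h' y ≠ none ↔ (T.lev y = γ ∧ ∃ x, T.le y x ∧ h x ≠ none)) ∧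
  (∀ y x, T.lev y = γ → T.le y x → h x ≠ none → h' y = h x)

/-- the approximation `f` (with `last f = a`) fulfills the requirement `H` of height `a` -/
def FulfillsReq {α : Type u} (T : PreTree α) (a : Ordinal) (f : α → Option ℚ)
    (H : Set (α → Option ℚ)) : Prop :=
  ∀ t : Set α, t.Finite → t ⊆ {x | T.lev x = a} →
    ∃ h ∈ H, Bounds T a f h ∧ ∀ x ∈ t, h x = none

/-- an approximation: a partial specializing function defined exactly on the nodes of
level ≤ a -/
def IsApprox {α : Type u} (T : PreTree α) (a : Ordinal) (f : α → Option ℚ) : Prop :=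
  a < omega1 ∧
  (∀ x, f x ≠ none ↔ T.lev x ≤ a) ∧
  (∀ x y qx qy, T.lt x y → f x = some qx → f y = some qy → qx < qy)

/-- a promise with base `b`: countable nonempty coherent sets of dispersed requirements,
one for each level `γ` with `b ≤ γ < ω₁`, all of one fixed arity -/
def IsPromise {α : Type u} (T : PreTree α) (b : Ordinal)
    (Γ : Ordinal → Set (Set (α → Option ℚ))) : Prop :=
  b < omega1 ∧
  (∃ n : ℕ, ∀ γ, b ≤ γ → γ < omega1 → ∀ H ∈ Γ γ, IsRequirement T γ n H) ∧
  (∀ γ, b ≤ γ → γ < omega1 →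
    (Γ γ).Countable ∧ (Γ γ).Nonempty ∧ ∀ H ∈ Γ γ, DispersedReq T γ H) ∧
  (∀ γ₀ γ₁, b ≤ γ₀ → γ₀ < γ₁ → γ₁ < omega1 →
    Γ γ₀ = {H' | ∃ H ∈ Γ γ₁, H' = {h' | ∃ h ∈ H, IsRestrictTo T γ₀ h h'}})

/-- a condition of the specializing poset `S(T)`: an approximation together with a
promise which it fulfills -/
structure SCond {α : Type u} (T : PreTree α) where
  last : Ordinal
  f : α → Option ℚ
  base : Ordinal
  Γ : Ordinal → Set (Set (α → Option ℚ))
  approx : IsApprox T last f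
  promise : IsPromise T base Γ
  base_le : base ≤ last
  fulfills : ∀ H ∈ Γ last, FulfillsReq T last f H

/-- `q` extends `p` in `S(T)` -/
def SExtends {α : Type u} {T : PreTree α} (q p : SCond T) : Prop :=
  p.last ≤ q.last ∧
  (∀ x, p.f x ≠ none → q.f x = p.f x) ∧
  ∀ γ, q.last ≤ γ → γ < omega1 → p.Γ γ ⊆ q.Γ γ

/-! the naive specializing poset S₂(T) -/

/-- a condition of the poset `S₂(T)` -/
def IsS2Cond {α : Type u} (T : PreTree α) (a : Ordinal) (f : α → Option ℚ) : Prop :=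
  IsApprox T a f ∧
  ∀ a₀, a₀ < a → ∀ (n : ℕ) (x : Fin (n+1) → α) (q : Fin (n+1) → ℚ),
    (∀ i, T.lev (x i) = a₀) →
    (∀ i, ∃ r, f (x i) = some r ∧ r < q i) →
    ∃ y : Fin (n+1) → α, ∀ i, T.lt (x i) (y i) ∧ T.lev (y i) = a ∧ f (y i) = some (q i)

/-- the disjoint union of two trees -/
def sumTree {α : Type u} {β : Type v} (A : PreTree α) (B : PreTree β) : PreTree (α ⊕ β) where
  lt x y :=
    match x, y with
    | Sum.inl a, Sum.inl b => A.lt a b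
    | Sum.inr a, Sum.inr b => B.lt a b
    | _, _ => False
  lev := Sum.elim A.lev B.lev

/-!
The extension is obtained by forcing with finite conditions: partial maps into `ℚ`, strictly
increasing along the tree, that agree with `f` up to level `a` and carry finitely many new
values on nodes of levels in `(a, b]`. As only countably many nodes have level `≤ b`, the
Rasiowa–Sikorski lemma yields a generic filter meeting the dense sets that give a node `z`
of level `≤ b` a value `v` and, when `a ≤ lev z < b`, realise a prescribed `q > v` at a node
of level `b` above `z`. The second density argument is where the `ℵ₀` immediate successors
are used: one of them avoids the finitely many new nodes not below `z`, so above it lies a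
node of level `b` whose valued predecessors are all `≤ z`. Nodes below level `a` are first
lifted to level `a` inside `f`, which is an `S₂(T)` condition.
-/

namespace PreTree

variable {α : Type*} {T : PreTree α}

theorem IsTree.not_lt_self (hT : T.IsTree) (x : α) : ¬ T.lt x x :=
  fun h => (hT.2.1 x x h).false

theorem IsTree.lev_le_of_le (hT : T.IsTree) {x y : α} (h : T.le x y) : T.lev x ≤ T.lev y := by
  rcases h with rfl | h
  · exact le_rfl
  · exact (hT.2.1 _ _ h).le

theorem IsTree.le_of_le_of_le (hT : T.IsTree) {u v y : α} (hu : T.le u y) (hv : T.le v y)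
    (huv : T.lev u ≤ T.lev v) : T.le u v := by
  rcases hv with rfl | hv
  · exact hu
  rcases hu with rfl | hu
  · exact absurd (huv.trans_lt (hT.2.1 _ _ hv)) (lt_irrefl _)
  rcases hT.2.2.1 y u v hu hv with h | h | h
  · exact Or.inl h
  · exact Or.inr h
  · exact absurd (huv.trans_lt (hT.2.1 _ _ h)) (lt_irrefl _)

theorem IsTree.eq_of_le_of_le (hT : T.IsTree) {u v y : α} (hu : T.le u y) (hv : T.le v y)
    (huv : T.lev u = T.lev v) : u = v := by
  rcases hT.le_of_le_of_le hu hv huv.le with h | h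
  · exact h
  · exact absurd (hT.2.1 _ _ h) huv.not_lt

theorem IsOmega1Tree.exists_lt_lev_eq_forall_not_le (hT : T.IsOmega1Tree) {b : Ordinal}
    (hb : b < omega1) {x : α} (hx : T.lev x < b) {A : Set α} (hA : A.Finite)
    (hAx : ∀ z ∈ A, ¬ T.le z x) :
    ∃ y, T.lt x y ∧ T.lev y = b ∧ ∀ z ∈ A, ¬ T.le z y := by
  have ht := hT.1
  -- each `z ∈ A` lies above at most one immediate successor of `x`
  have hbad : {s | T.lev s = T.lev x + 1 ∧ ∃ z ∈ A, T.le s z}.Finite := by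
    refine Set.Finite.subset (hA.biUnion fun z _ => Set.Subsingleton.finite
      (s := {s | T.lev s = T.lev x + 1 ∧ T.le s z}) fun s hs s' hs' => ?_)
      fun s ⟨hs, z, hz, hsz⟩ => Set.mem_biUnion hz ⟨hs, hsz⟩
    exact ht.eq_of_le_of_le hs.2 hs'.2 (hs.1.trans hs'.1.symm)
  obtain ⟨s, ⟨hxs, hs⟩, hsbad⟩ := ((hT.2.2.2.2.1 x).sdiff hbad).nonempty
  obtain ⟨y, hsy, hy⟩ : ∃ y, T.le s y ∧ T.lev y = b := by
    rcases (hs.trans_le (Order.add_one_le_iff.mpr hx)).lt_or_eq with hsb | hsb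
    · obtain ⟨y, hsy, hy⟩ := hT.2.2.2.2.2 s b hsb hb
      exact ⟨y, Or.inr hsy, hy⟩
    · exact ⟨s, Or.inl rfl, hsb⟩
  have hxy : T.lt x y := by
    rcases hsy with rfl | hsy
    exacts [hxs, ht.1 _ _ _ hxs hsy]
  refine ⟨y, hxy, hy, fun z hz hzy => hsbad ⟨hs, z, hz, ?_⟩⟩
  have hxz : T.lev x < T.lev z :=
    not_le.mp fun h => hAx z hz (ht.le_of_le_of_le hzy (Or.inr hxy) h)
  exact ht.le_of_le_of_le hsy hzy (hs.trans_le (Order.add_one_le_iff.mpr hxz))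

def IsSpecializing (T : PreTree α) (p : α → Option ℚ) : Prop :=
  ∀ x y qx qy, T.lt x y → p x = some qx → p y = some qy → qx < qy

theorem IsSpecializing.le_of_le {p : α → Option ℚ} (hp : T.IsSpecializing p) {x y : α}
    {qx qy : ℚ} (hxy : T.le x y) (hx : p x = some qx) (hy : p y = some qy) : qx ≤ qy := by
  rcases hxy with rfl | hxy
  · exact (Option.some_injective _ (hx.symm.trans hy)).le
  · exact (hp x y qx qy hxy hx hy).le

theorem IsSpecializing.update [DecidableEq α] {p : α → Option ℚ} (hT : T.IsTree)
    (hp : T.IsSpecializing p) {z : α} {v : ℚ}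
    (hlo : ∀ t q, T.lt t z → p t = some q → q < v)
    (hhi : ∀ t q, T.lt z t → p t = some q → v < q) :
    T.IsSpecializing (Function.update p z (some v)) := by
  intro x y qx qy hxy hx hy
  by_cases hxz : x = z <;> by_cases hyz : y = z
  · rw [hxz, hyz] at hxy
    exact absurd hxy (hT.not_lt_self z)
  · rw [hxz, Function.update_self, Option.some_inj] at hx
    rw [Function.update_of_ne hyz] at hy
    exact hx ▸ hhi y qy (hxz ▸ hxy) hy
  · rw [hyz, Function.update_self, Option.some_inj] at hy
    rw [Function.update_of_ne hxz] at hx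
    exact hy ▸ hlo x qx (hyz ▸ hxy) hx
  · rw [Function.update_of_ne hxz] at hx
    rw [Function.update_of_ne hyz] at hy
    exact hp x y qx qy hxy hx hy

end PreTree

theorem Set.Finite.setOf_exists_mem_and_eq_some {α β : Type*} {S : Set α} (hS : S.Finite)
    (p : α → Option β) (P : α → Prop) : {q | ∃ t ∈ S, P t ∧ p t = some q}.Finite :=
  (hS.image p).preimage (Option.some_injective β).injOn |>.subset
    fun _ ⟨t, ht, _, hq⟩ => ⟨t, ht, hq⟩

theorem Ordinal.countable_Iic_of_lt_omega1 {b : Ordinal.{0}} (hb : b < omega1) :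
    (Set.Iic b).Countable := by
  rw [← Set.Iio_insert]
  refine Set.Countable.insert b (Cardinal.le_aleph0_iff_set_countable.mp ?_)
  rw [Cardinal.mk_Iio_ordinal, Cardinal.lift_le_aleph0, ← Cardinal.lt_aleph_one_iff]
  exact Cardinal.lt_ord.mp hb

theorem PreTree.IsOmega1Tree.countable_setOf_lev_le {α : Type*} {T : PreTree α}
    (hT : T.IsOmega1Tree) {b : Ordinal} (hb : b < omega1) : {x | T.lev x ≤ b}.Countable := by
  refine Set.Countable.mono (fun x hx => ?_) ((Ordinal.countable_Iic_of_lt_omega1 hb).biUnion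
    fun o ho => hT.2.2.1 o (lt_of_le_of_lt ho hb))
  exact Set.mem_biUnion (x := T.lev x) hx rfl

structure FinExt {α : Type*} (T : PreTree α) (a b : Ordinal) (f : α → Option ℚ) where
  toFun : α → Option ℚ
  eq_of_lev_le : ∀ x, T.lev x ≤ a → toFun x = f x
  lev_le_of_ne_none : ∀ x, toFun x ≠ none → T.lev x ≤ b
  finite : {x | toFun x ≠ none ∧ a < T.lev x}.Finite
  isSpecializing : T.IsSpecializing toFun

namespace FinExt

variable {α : Type*} {T : PreTree α} {a b : Ordinal} {f : α → Option ℚ}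

instance : Preorder (FinExt T a b f) where
  le p p' := ∀ x q, p.toFun x = some q → p'.toFun x = some q
  le_refl _ _ _ := id
  le_trans _ _ _ h h' x q hx := h' x q (h x q hx)

def ofApprox (hf : IsApprox T a f) (hab : a ≤ b) : FinExt T a b f where
  toFun := f
  eq_of_lev_le _ _ := rfl
  lev_le_of_ne_none x hx := ((hf.2.1 x).mp hx).trans hab
  finite := Set.finite_empty.subset fun x hx => (hx.2.not_ge ((hf.2.1 x).mp hx.1)).elim
  isSpecializing := hf.2.2

theorem exists_le_apply_eq_some (hT : T.IsTree) (p : FinExt T a b f) {z : α}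
    (hpz : p.toFun z = none) (haz : a < T.lev z) (hzb : T.lev z ≤ b) {v : ℚ}
    (hlo : ∀ t q, T.lt t z → p.toFun t = some q → q < v)
    (hhi : ∀ t q, T.lt z t → p.toFun t = some q → v < q) :
    ∃ p' : FinExt T a b f, p ≤ p' ∧ p'.toFun z = some v := by
  classical
  refine ⟨⟨Function.update p.toFun z (some v), fun x hx => ?_, fun x hx => ?_, ?_,
    p.isSpecializing.update hT hlo hhi⟩, fun x q hx => ?_,
    Function.update_self z (some v) p.toFun⟩
  · rw [Function.update_of_ne (by rintro rfl; exact hx.not_gt haz), p.eq_of_lev_le x hx]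
  · by_cases hxz : x = z
    · exact hxz ▸ hzb
    · exact p.lev_le_of_ne_none x (by rwa [Function.update_of_ne hxz] at hx)
  · refine (p.finite.insert z).subset fun x ⟨hx, hax⟩ => ?_
    by_cases hxz : x = z
    · exact hxz ▸ Set.mem_insert x _
    · exact Set.mem_insert_of_mem _ ⟨by rwa [Function.update_of_ne hxz] at hx, hax⟩
  · change Function.update p.toFun z (some v) x = some q
    rwa [Function.update_of_ne (by rintro rfl; simp [hpz] at hx)]

theorem exists_le_apply_ne_none (hT : T.IsTree) (hf : IsApprox T a f) (p : FinExt T a b f)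
    {z : α} (hzb : T.lev z ≤ b) : ∃ p' ≥ p, p'.toFun z ≠ none := by
  by_cases hpz : p.toFun z ≠ none
  · exact ⟨p, le_rfl, hpz⟩
  rw [not_not] at hpz
  have haz : a < T.lev z := not_le.mp fun h =>
    (hf.2.1 z).mpr h (p.eq_of_lev_le z h ▸ hpz)
  obtain ⟨w, ⟨hwz, hwa⟩, -⟩ := hT.2.2.2 z a haz
  obtain ⟨r, hr⟩ := Option.ne_none_iff_exists'.mp
    (p.eq_of_lev_le w hwa.le ▸ (hf.2.1 w).mpr hwa.le)
  -- besides the finitely many new values, the values below `z` are bounded by `f w = r`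
  obtain ⟨v, hlo, hhi⟩ := Set.Finite.exists_between'
    ((p.finite.insert w).setOf_exists_mem_and_eq_some p.toFun (T.lt · z))
    (p.finite.setOf_exists_mem_and_eq_some p.toFun (T.lt z ·))
    fun _ ⟨t, _, htz, ht⟩ _ ⟨t', _, hzt', ht'⟩ =>
      p.isSpecializing t t' _ _ (hT.1 _ _ _ htz hzt') ht ht'
  obtain ⟨p', hpp', hp'z⟩ := p.exists_le_apply_eq_some hT hpz haz hzb (v := v)
    (fun t q htz ht => by
      by_cases hat : a < T.lev t
      · exact hlo q ⟨t, Or.inr ⟨by simp [ht], hat⟩, htz, ht⟩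
      · have htw : T.le t w := hT.le_of_le_of_le (Or.inr htz) (Or.inr hwz) (hwa ▸ not_lt.mp hat)
        exact (p.isSpecializing.le_of_le htw ht hr).trans_lt
          (hlo r ⟨w, Or.inl rfl, hwz, hr⟩))
    fun t q hzt ht =>
      hhi q ⟨t, ⟨by simp [ht], haz.trans (hT.2.1 _ _ hzt)⟩, hzt, ht⟩
  exact ⟨p', hpp', by simp [hp'z]⟩

theorem exists_le_apply_eq_some_of_lt (hT : T.IsOmega1Tree) (hb : b < omega1)
    (p : FinExt T a b f) {x : α} (hax : a ≤ T.lev x) (hxb : T.lev x < b) {v q : ℚ}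
    (hx : p.toFun x = some v) (hvq : v < q) :
    ∃ p' ≥ p, ∃ y, T.lt x y ∧ T.lev y = b ∧ p'.toFun y = some q := by
  obtain ⟨y, hxy, hy, hyA⟩ := hT.exists_lt_lev_eq_forall_not_le hb hxb
    (A := {t | (p.toFun t ≠ none ∧ a < T.lev t) ∧ ¬ T.le t x}) (p.finite.subset fun _ h => h.1)
    fun _ h => h.2
  have hbelow : ∀ t, T.le t y → p.toFun t ≠ none → T.le t x := fun t hty ht => by
    by_contra htx
    have hxt : T.lev x < T.lev t :=
      not_le.mp fun h => htx (hT.1.le_of_le_of_le hty (Or.inr hxy) h)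
    exact hyA t ⟨⟨ht, hax.trans_lt hxt⟩, htx⟩ hty
  have hpy : p.toFun y = none := by
    by_contra h
    exact (hT.1.lev_le_of_le (hbelow y (Or.inl rfl) h)).not_gt (hy ▸ hxb)
  obtain ⟨p', hpp', hp'y⟩ := p.exists_le_apply_eq_some hT.1 hpy (hy ▸ hax.trans_lt hxb) hy.le
    (v := q)
    (fun t q' hty ht =>
      (p.isSpecializing.le_of_le (hbelow t (Or.inr hty) (by simp [ht])) ht hx).trans_lt hvq)
    fun t q' hyt ht =>
      absurd (p.lev_le_of_ne_none t (by simp [ht])) (not_le.mpr (hy ▸ hT.1.2.1 _ _ hyt))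
  exact ⟨p', hpp', y, hxy, hy, hp'y⟩

/-- The dense sets of the construction. -/
def Settles (z : α) (q : ℚ) : Set (FinExt T a b f) :=
  {p | ∃ v, p.toFun z = some v ∧
    (a ≤ T.lev z → T.lev z < b → v < q → ∃ y, T.lt z y ∧ T.lev y = b ∧ p.toFun y = some q)}

theorem isCofinal_settles (hT : T.IsOmega1Tree) (hf : IsApprox T a f) (hb : b < omega1)
    {z : α} (hzb : T.lev z ≤ b) (q : ℚ) : IsCofinal (Settles z q : Set (FinExt T a b f)) := by
  intro p
  obtain ⟨p₁, hp₁, hz₁⟩ := p.exists_le_apply_ne_none hT.1 hf hzb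
  obtain ⟨v, hv⟩ := Option.ne_none_iff_exists'.mp hz₁
  by_cases h : a ≤ T.lev z ∧ T.lev z < b ∧ v < q
  · obtain ⟨p₂, hp₂, hy⟩ := p₁.exists_le_apply_eq_some_of_lt hT hb h.1 h.2.1 hv h.2.2
    exact ⟨p₂, ⟨v, hp₂ z v hv, fun _ _ _ => hy⟩, hp₁.trans hp₂⟩
  · exact ⟨p₁, ⟨v, hv, fun h₁ h₂ h₃ => absurd ⟨h₁, h₂, h₃⟩ h⟩, hp₁⟩

theorem exists_forall_eq_some_iff {S : Set (FinExt T a b f)} (hS : DirectedOn (· ≤ ·) S) :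
    ∃ g : α → Option ℚ, ∀ x q, g x = some q ↔ ∃ p ∈ S, p.toFun x = some q := by
  classical
  refine ⟨fun x => if h : ∃ q, ∃ p ∈ S, p.toFun x = some q then some h.choose else none,
    fun x q => ?_⟩
  dsimp only
  split_ifs with h
  · refine ⟨fun hq => Option.some_injective _ hq ▸ h.choose_spec, fun ⟨p, hp, hpx⟩ => ?_⟩
    obtain ⟨p', hp', hp'x⟩ := h.choose_spec
    obtain ⟨r, -, hpr, hp'r⟩ := hS p hp p' hp'
    exact (hp'r x _ hp'x).symm.trans (hpr x q hpx)
  · exact ⟨nofun, fun hq => (h ⟨q, hq⟩).elim⟩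

end FinExt

section Extension

variable {α : Type*} {T : PreTree α}

theorem IsApprox.exists_extension {a b : Ordinal} {f : α → Option ℚ} (hT : T.IsOmega1Tree)
    (hf : IsApprox T a f) (hab : a ≤ b) (hb : b < omega1) :
    ∃ g, IsApprox T b g ∧ (∀ x, f x ≠ none → g x = f x) ∧
      ∀ x v q, a ≤ T.lev x → T.lev x < b → g x = some v → v < q →
        ∃ y, T.lt x y ∧ T.lev y = b ∧ g y = some q := by
  have := (hT.countable_setOf_lev_le hb).to_subtype
  let _ : Encodable ({z | T.lev z ≤ b} × ℚ) := Encodable.ofCountable _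
  set I := Order.idealOfCofinals (FinExt.ofApprox hf hab)
    fun i : {z | T.lev z ≤ b} × ℚ =>
      ⟨FinExt.Settles i.1.1 i.2, FinExt.isCofinal_settles hT hf hb i.1.2 i.2⟩
  obtain ⟨g, hg⟩ := FinExt.exists_forall_eq_some_iff I.directed
  have hsettles : ∀ z, T.lev z ≤ b → ∀ q, ∃ p ∈ I, p ∈ FinExt.Settles z q := fun z hz q =>
    (Order.cofinal_meets_idealOfCofinals _ _ (⟨z, hz⟩, q)).imp fun _ h => ⟨h.2, h.1⟩
  refine ⟨g, ⟨hb, fun x => ⟨fun hx => ?_, fun hx => ?_⟩, ?_⟩, fun x hx => ?_, ?_⟩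
  · obtain ⟨q, hq⟩ := Option.ne_none_iff_exists'.mp hx
    obtain ⟨p, -, hp⟩ := (hg x q).mp hq
    exact p.lev_le_of_ne_none x (by simp [hp])
  · obtain ⟨p, hpI, v, hv, -⟩ := hsettles x hx 0
    simp [(hg x v).mpr ⟨p, hpI, hv⟩]
  · intro x y qx qy hxy hx hy
    obtain ⟨p, hp, hpx⟩ := (hg x qx).mp hx
    obtain ⟨p', hp', hp'y⟩ := (hg y qy).mp hy
    obtain ⟨r, -, hpr, hp'r⟩ := I.directed p hp p' hp'
    exact r.isSpecializing x y qx qy hxy (hpr x qx hpx) (hp'r y qy hp'y)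
  · obtain ⟨q, hq⟩ := Option.ne_none_iff_exists'.mp hx
    rw [hq]
    exact (hg x q).mpr ⟨_, Order.mem_idealOfCofinals _ _, hq⟩
  · intro x v q hax hxb hx hvq
    obtain ⟨p, hpI, v', hv', hreal⟩ := hsettles x hxb.le q
    obtain rfl : v' = v := Option.some_injective _ (((hg x v').mpr ⟨p, hpI, hv'⟩).symm.trans hx)
    obtain ⟨y, hxy, hy, hpy⟩ := hreal hax hxb hvq
    exact ⟨y, hxy, hy, (hg y q).mpr ⟨p, hpI, hpy⟩⟩

theorem IsS2Cond.exists_lt_lev_eq {a : Ordinal} {f : α → Option ℚ} (hf : IsS2Cond T a f)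
    {x : α} (hxa : T.lev x < a) {r q : ℚ} (hx : f x = some r) (hrq : r < q) :
    ∃ y, T.lt x y ∧ T.lev y = a ∧ f y = some q := by
  obtain ⟨y, hy⟩ := hf.2 _ hxa 0 (fun _ => x) (fun _ => q) (fun _ => rfl) fun _ => ⟨r, hx, hrq⟩
  exact ⟨y 0, hy 0⟩

theorem IsApprox.isS2Cond {b : Ordinal} {g : α → Option ℚ} (hg : IsApprox T b g)
    (h : ∀ x v q, T.lev x < b → g x = some v → v < q →
      ∃ y, T.lt x y ∧ T.lev y = b ∧ g y = some q) : IsS2Cond T b g := by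
  refine ⟨hg, fun a₀ ha₀ n x q hx hxq => ?_⟩
  choose r hr hrq using hxq
  choose y hy using fun i => h (x i) (r i) (q i) ((hx i).trans_lt ha₀) (hr i) (hrq i)
  exact ⟨y, hy⟩

end Extension

/-- for an Aronszajn tree `T`, every condition of the poset `S₂(T)` can be
extended to any countable height. -/
theorem s2Cond_extension {α : Type} (T : PreTree α) (hT : T.Aronszajn)
    (a : Ordinal) (f : α → Option ℚ) (hf : IsS2Cond T a f)
    (b : Ordinal) (hab : a ≤ b) (hb : b < omega1) :
    ∃ g : α → Option ℚ, IsS2Cond T b g ∧ ∀ x, f x ≠ none → g x = f x := by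
  rcases hab.eq_or_lt with rfl | hab
  · exact ⟨f, hf, fun _ _ => rfl⟩
  obtain ⟨g, hg, hfg, hreal⟩ := hf.1.exists_extension hT.1 hab.le hb
  refine ⟨g, hg.isS2Cond fun x v q hxb hx hvq => ?_, hfg⟩
  rcases le_or_gt a (T.lev x) with hax | hxa
  · exact hreal x v q hax hxb hx hvq
  -- climb inside `f` to level `a`, leaving room below `q`
  obtain ⟨m, hvm, hmq⟩ := exists_between hvq
  have hfx : f x = some v := (hfg x ((hf.1.2.1 x).mpr hxa.le)).symm.trans hx
  obtain ⟨x', hxx', hx', hfx'⟩ := hf.exists_lt_lev_eq hxa hfx hvm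
  obtain ⟨y, hx'y, hy, hgy⟩ :=
    hreal x' m q hx'.ge (hx' ▸ hab) ((hfg x' (by simp [hfx'])).trans hfx') hmq
  exact ⟨y, hT.1.1.1 _ _ _ hxx' hx'y, hy, hgy⟩
end
end

section
/- Let T₁ be an Aronszajn tree, let T₂ be a disjoint isomorphic copy of T₁ with isomorphism i : T₁ → T₂, and let T = T₁ ∪ T₂ (an Aronszajn tree with two roots). Then for every n < ω, the set D_n = {f ∈ S₂(T) : dom f = T↾(α+1) for some α < ω₁, and for every x ∈ T₁ of level α, f(x) > n or f(i(x)) > n} is dense and open in the poset S₂(T). -/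
noncomputable section

open Cardinal Set

universe u v w

/-! A condition `f` of height `a` extends to height `a + 1` as soon as level `a + 1` is labelled
so that above every node `z` of level `a` each rational `q > f z` is attained and no label is
`≤ f z`. A node `z` of `T₁` has infinitely many immediate successors, and the successors of its
twin `i z` are the twins of these. Split them into two infinite families: on the first, the
nodes of `T₁` realise every required value while their twins get labels `> n`; on the second,
the roles are swapped. Openness holds because labels increase along branches. -/

theorem add_one_lt_omega1 {a : Ordinal} (ha : a < omega1) : a + 1 < omega1 := by
  rw [← Order.succ_eq_add_one]
  exact (Cardinal.isSuccLimit_ord (Cardinal.aleph0_le_aleph 1)).succ_lt ha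

namespace PreTree

variable {α : Type u} {β : Type v} {γ : Type w}

theorem IsTree.map_equiv {A : PreTree α} {B : PreTree β} (e : α ≃ β)
    (hlt : ∀ x y, A.lt x y ↔ B.lt (e x) (e y)) (hlev : ∀ x, B.lev (e x) = A.lev x)
    (hA : A.IsTree) : B.IsTree := by
  obtain ⟨htrans, hmono, hlin, hpred⟩ := hA
  refine ⟨?_, ?_, ?_, ?_⟩ <;>
    simp only [e.symm.forall_congr_left, e.symm.existsUnique_congr_left, Equiv.symm_symm,
      e.injective.eq_iff, ← hlt, hlev]
  exacts [htrans, hmono, hlin, hpred]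

theorem IsTree.sumTree {A : PreTree α} {B : PreTree β} (hA : A.IsTree) (hB : B.IsTree) :
    (sumTree A B).IsTree := by
  obtain ⟨hAt, hAm, hAl, hAp⟩ := hA
  obtain ⟨hBt, hBm, hBl, hBp⟩ := hB
  refine ⟨?_, ?_, ?_, ?_⟩
  · rintro (x | x) (y | y) (z | z) hxy hyz <;> first
      | exact hAt _ _ _ hxy hyz | exact hBt _ _ _ hxy hyz | exact hxy.elim | exact hyz.elim
  · rintro (x | x) (y | y) hxy <;> first | exact hAm _ _ hxy | exact hBm _ _ hxy | exact hxy.elim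
  · rintro (x | x) (y | y) (z | z) hyx hzx <;> first
      | exact hyx.elim | exact hzx.elim
      | exact (hAl _ _ _ hyx hzx).imp (congrArg _) id
      | exact (hBl _ _ _ hyx hzx).imp (congrArg _) id
  · rintro (x | x) o ho
    · obtain ⟨y, hy, huniq⟩ := hAp x o ho
      refine ⟨Sum.inl y, hy, ?_⟩
      rintro (z | z) hz
      exacts [congrArg _ (huniq z hz), hz.1.elim]
    · obtain ⟨y, hy, huniq⟩ := hBp x o ho
      refine ⟨Sum.inr y, hy, ?_⟩
      rintro (z | z) hz
      exacts [hz.1.elim, congrArg _ (huniq z hz)]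

theorem IsTree.exists_le_lev {T : PreTree γ} (hT : T.IsTree) {x : γ} {o : Ordinal}
    (ho : o ≤ T.lev x) : ∃ z, T.le z x ∧ T.lev z = o := by
  rcases ho.eq_or_lt with rfl | ho
  · exact ⟨x, Or.inl rfl, rfl⟩
  · obtain ⟨z, hz, -⟩ := hT.2.2.2 x o ho
    exact ⟨z, Or.inr hz.1, hz.2⟩

end PreTree

variable {α : Type u} {β : Type v} {γ : Type w}

theorem exists_pair_labelling {S : Set γ} (hS : S.Infinite) (r s c : ℚ) :
    ∃ v : γ → ℚ × ℚ, (∀ x, r < (v x).1 ∧ s < (v x).2 ∧ (c < (v x).1 ∨ c < (v x).2)) ∧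
      (∀ q, r < q → ∃ x ∈ S, (v x).1 = q) ∧ (∀ q, s < q → ∃ x ∈ S, (v x).2 = q) := by
  classical
  -- `emb (inl q)` carries the first label `q` (if `r < q`), `emb (inr q)` the second; all other
  -- labels are `R` or `R'`, which exceed `c`.
  set R := max r c + 1
  set R' := max s c + 1
  let emb : ℚ ⊕ ℚ ↪ S := (Encodable.encode' _).trans hS.natEmbedding
  let lab : ℚ ⊕ ℚ → ℚ × ℚ :=
    Sum.elim (fun q => (if r < q then q else R, R')) (fun q => (R, if s < q then q else R'))
  have hemb : Function.Injective fun p => (emb p : γ) := Subtype.val_injective.comp emb.injective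
  have hR : r < R ∧ c < R := by constructor <;> linarith [le_max_left r c, le_max_right r c]
  have hR' : s < R' ∧ c < R' := by constructor <;> linarith [le_max_left s c, le_max_right s c]
  refine ⟨Function.extend (fun p => (emb p : γ)) lab fun _ => (R, R'), fun x => ?_,
    fun q hq => ⟨emb (Sum.inl q), (emb _).2, ?_⟩, fun q hq => ⟨emb (Sum.inr q), (emb _).2, ?_⟩⟩
  · rw [Function.extend_def]
    split_ifs with hx
    · rcases Classical.choose hx with q | q <;> dsimp only [lab, Sum.elim_inl, Sum.elim_inr] <;>
        split_ifs <;> simp_all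
    · simp_all
  · simp [hemb.extend_apply, lab, hq]
  · simp [hemb.extend_apply, lab, hq]

/-- `v`, put on level `a + 1`, extends any `S₂`-condition whose values on level `a` are `ρ`. -/
def IsRichLabelling (T : PreTree γ) (a : Ordinal) (ρ v : γ → ℚ) : Prop :=
  (∀ z x, T.lev z = a → T.lt z x → T.lev x = a + 1 → ρ z < v x) ∧
  ∀ z q, T.lev z = a → ρ z < q → ∃ x, T.lt z x ∧ T.lev x = a + 1 ∧ v x = q

theorem IsRichLabelling.sumTree {A : PreTree α} {B : PreTree β} {a : Ordinal}
    {ρ₁ v₁ : α → ℚ} {ρ₂ v₂ : β → ℚ} (h₁ : IsRichLabelling A a ρ₁ v₁)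
    (h₂ : IsRichLabelling B a ρ₂ v₂) :
    IsRichLabelling (sumTree A B) a (Sum.elim ρ₁ ρ₂) (Sum.elim v₁ v₂) := by
  refine ⟨?_, ?_⟩
  · rintro (z | z) (x | x) hz hzx hx
    exacts [h₁.1 z x hz hzx hx, hzx.elim, hzx.elim, h₂.1 z x hz hzx hx]
  · rintro (z | z) q hz hq
    · obtain ⟨x, hx⟩ := h₁.2 z q hz hq
      exact ⟨Sum.inl x, hx⟩
    · obtain ⟨x, hx⟩ := h₂.2 z q hz hq
      exact ⟨Sum.inr x, hx⟩

theorem IsRichLabelling.map_equiv {A : PreTree α} {B : PreTree β} (e : α ≃ β)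
    (hlt : ∀ x y, A.lt x y ↔ B.lt (e x) (e y)) (hlev : ∀ x, B.lev (e x) = A.lev x)
    {a : Ordinal} {ρ : β → ℚ} {v : α → ℚ} (h : IsRichLabelling A a (ρ ∘ e) v) :
    IsRichLabelling B a ρ (v ∘ e.symm) := by
  obtain ⟨hgt, hhit⟩ := h
  refine ⟨?_, ?_⟩ <;> simp only [e.symm.forall_congr_left, Equiv.symm_symm] <;>
    simp only [← hlt, hlev, Function.comp_apply, Equiv.symm_apply_apply]
  · exact hgt
  · intro z q hz hq
    obtain ⟨x, hzx, hx, hxq⟩ := hhit z q hz hq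
    exact ⟨e x, (hlt z x).1 hzx, (hlev x).trans hx, by simpa using hxq⟩

theorem exists_twin_labelling {A : PreTree α} (hA : A.IsTree)
    (hsucc : ∀ z, {x | A.lt z x ∧ A.lev x = A.lev z + 1}.Infinite) (a : Ordinal)
    (ρ₁ ρ₂ : α → ℚ) (c : ℚ) :
    ∃ v₁ v₂ : α → ℚ, IsRichLabelling A a ρ₁ v₁ ∧ IsRichLabelling A a ρ₂ v₂ ∧
      ∀ x, c < v₁ x ∨ c < v₂ x := by
  choose V hV using fun z => exists_pair_labelling (hsucc z) (ρ₁ z) (ρ₂ z) c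
  have hpar : ∀ x, ∃ z, A.lev x = a + 1 → A.lt z x ∧ A.lev z = a := fun x => by
    by_cases hx : A.lev x = a + 1
    · obtain ⟨z, hz, -⟩ := hA.2.2.2 x a (hx ▸ lt_add_one a)
      exact ⟨z, fun _ => hz⟩
    · exact ⟨x, fun h => absurd h hx⟩
  choose par hpar using hpar
  have par_eq : ∀ z x, A.lev z = a → A.lt z x → A.lev x = a + 1 → par x = z :=
    fun z x hz hzx hx => (hA.2.2.2 x a (hx ▸ lt_add_one a)).unique (hpar x hx) ⟨hzx, hz⟩
  have rich : ∀ (ρ : α → ℚ) (W : α → α → ℚ), (∀ z x, ρ z < W z x) →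
      (∀ z q, ρ z < q → ∃ x ∈ {x | A.lt z x ∧ A.lev x = A.lev z + 1}, W z x = q) →
      IsRichLabelling A a ρ fun x => W (par x) x := by
    refine fun ρ W hgt hhit => ⟨fun z x hz hzx hx => ?_, fun z q hz hq => ?_⟩
    · simpa only [par_eq z x hz hzx hx] using hgt z x
    · obtain ⟨x, ⟨hzx, hx⟩, hxq⟩ := hhit z q hq
      rw [hz] at hx
      exact ⟨x, hzx, hx, by simpa only [par_eq z x hz hzx hx] using hxq⟩
  exact ⟨_, _, rich ρ₁ (fun z x => (V z x).1) (fun z x => ((hV z).1 x).1) fun z => (hV z).2.1,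
    rich ρ₂ (fun z x => (V z x).2) (fun z x => ((hV z).1 x).2.1) fun z => (hV z).2.2,
    fun x => ((hV _).1 x).2.2⟩

def extendSucc (T : PreTree γ) (a : Ordinal) (f : γ → Option ℚ) (v : γ → ℚ) (u : γ) :
    Option ℚ :=
  if T.lev u = a + 1 then some (v u) else f u

section extendSucc

variable {T : PreTree γ} {a : Ordinal} {f : γ → Option ℚ} {v : γ → ℚ}

theorem extendSucc_of_lev_eq {u : γ} (hu : T.lev u = a + 1) :
    extendSucc T a f v u = some (v u) :=
  if_pos hu

theorem extendSucc_of_lev_ne {u : γ} (hu : T.lev u ≠ a + 1) : extendSucc T a f v u = f u :=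
  if_neg hu

theorem IsApprox.extendSucc_eq (hf : IsApprox T a f) {u : γ} (hu : f u ≠ none) :
    extendSucc T a f v u = f u :=
  extendSucc_of_lev_ne fun h => (lt_add_one a).not_ge (h ▸ (hf.2.1 u).1 hu)

theorem IsApprox.extendSucc (hT : T.IsTree) (hf : IsApprox T a f)
    (hv : IsRichLabelling T a (fun z => (f z).getD 0) v) :
    IsApprox T (a + 1) (extendSucc T a f v) := by
  obtain ⟨ha, hdom, hmono⟩ := hf
  refine ⟨add_one_lt_omega1 ha, fun u => ?_, fun u w qu qw huw hu hw => ?_⟩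
  · by_cases hu : T.lev u = a + 1
    · simp [extendSucc_of_lev_eq hu, hu]
    · rw [extendSucc_of_lev_ne hu, hdom, ← Order.succ_eq_add_one, Order.le_succ_iff_eq_or_le,
        Order.succ_eq_add_one, or_iff_right hu]
  by_cases hwl : T.lev w = a + 1
  · rw [extendSucc_of_lev_eq hwl, Option.some_inj] at hw
    have hul : T.lev u < a + 1 := hwl ▸ hT.2.1 u w huw
    rw [extendSucc_of_lev_ne hul.ne] at hu
    obtain ⟨z, ⟨hzw, hz⟩, -⟩ := hT.2.2.2 w a (hwl ▸ lt_add_one a)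
    obtain ⟨r, hr⟩ := Option.ne_none_iff_exists'.1 ((hdom z).2 hz.le)
    have hrw : r < v w := by simpa [hr] using hv.1 z w hz hzw hwl
    have hur : qu ≤ r := by
      rcases hT.2.2.1 w u z huw hzw with rfl | huz | hzu
      · exact (Option.some_inj.1 (hu.symm.trans hr)).le
      · exact (hmono _ _ _ _ huz hu hr).le
      · exact absurd (hz ▸ hT.2.1 z u hzu) (Order.lt_add_one_iff.1 hul).not_gt
    exact hw ▸ hur.trans_lt hrw
  · rw [extendSucc_of_lev_ne hwl] at hw
    have hwa : T.lev w ≤ a := (hdom w).1 (by simp [hw])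
    rw [extendSucc_of_lev_ne (((hT.2.1 u w huw).trans_le hwa).trans (lt_add_one a)).ne] at hu
    exact hmono u w qu qw huw hu hw

theorem IsRichLabelling.exists_extendSucc_eq_some
    (hv : IsRichLabelling T a (fun z => (f z).getD 0) v) {u : γ} (hu : T.lev u = a) {r q : ℚ}
    (hr : f u = some r) (hrq : r < q) :
    ∃ y, T.lt u y ∧ T.lev y = a + 1 ∧ extendSucc T a f v y = some q := by
  obtain ⟨y, huy, hy, hyq⟩ := hv.2 u q hu (by simpa [hr] using hrq)
  exact ⟨y, huy, hy, by rw [extendSucc_of_lev_eq hy, hyq]⟩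

theorem IsS2Cond.extendSucc (hT : T.IsTree) (hf : IsS2Cond T a f)
    (hv : IsRichLabelling T a (fun z => (f z).getD 0) v) :
    IsS2Cond T (a + 1) (extendSucc T a f v) := by
  refine ⟨hf.1.extendSucc hT hv, fun a₀ ha₀ m x q hx hxq => ?_⟩
  have hfx : ∀ k, ∃ r, f (x k) = some r ∧ r < q k := fun k => by
    rw [← extendSucc_of_lev_ne (f := f) (v := v) ((hx k).trans_lt ha₀).ne]
    exact hxq k
  choose r hr hrq using hfx
  rcases (Order.lt_add_one_iff.1 ha₀).eq_or_lt with rfl | ha₀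
  · choose y hy using fun k => hv.exists_extendSucc_eq_some (hx k) (hr k) (hrq k)
    exact ⟨y, hy⟩
  · choose q' hrq' hq'q using fun k => exists_between (hrq k)
    obtain ⟨y, hy⟩ := hf.2 a₀ ha₀ m x q' hx fun k => ⟨r k, hr k, hrq' k⟩
    choose z hz using fun k => hv.exists_extendSucc_eq_some (hy k).2.1 (hy k).2.2 (hq'q k)
    exact ⟨z, fun k => ⟨hT.1 _ _ _ (hy k).1 (hz k).1, (hz k).2⟩⟩

end extendSucc

theorem IsApprox.exists_gt_of_extends {T : PreTree γ} {b : Ordinal} {f g : γ → Option ℚ}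
    (hg : IsApprox T b g) (hfg : ∀ x, f x ≠ none → g x = f x) {u w : γ} (huw : T.le u w)
    (hw : T.lev w ≤ b) {c : ℚ} (hu : ∃ q, f u = some q ∧ c < q) :
    ∃ q, g w = some q ∧ c < q := by
  obtain ⟨q, hq, hcq⟩ := hu
  have hgu : g u = some q := (hfg u (by simp [hq])).trans hq
  rcases huw with rfl | huw
  · exact ⟨q, hgu, hcq⟩
  · obtain ⟨r, hr⟩ := Option.ne_none_iff_exists'.1 ((hg.2.1 w).2 hw)
    exact ⟨r, hr, hcq.trans (hg.2.2 u w q r huw hgu hr)⟩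

/-- for `T = T₁ ∪ T₂` the union of an Aronszajn tree with a disjoint
isomorphic copy of itself (via the isomorphism `i`), each set
`D_n = {f ∈ S₂(T) : every top-level x ∈ T₁ has f(x) > n or f(i(x)) > n}`
is dense and open in `S₂(T)`. -/
theorem doubled_tree_dense_open {α β : Type} (A : PreTree α) (B : PreTree β)
    (hA : A.Aronszajn) (i : α → β) (hbij : Function.Bijective i)
    (hiso : ∀ x y, A.lt x y ↔ B.lt (i x) (i y))
    (hlev : ∀ x, B.lev (i x) = A.lev x) (n : ℕ) :
    -- D_n is dense
    (∀ a f, IsS2Cond (sumTree A B) a f →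
      ∃ b g, IsS2Cond (sumTree A B) b g ∧ a ≤ b ∧
        (∀ x, f x ≠ none → g x = f x) ∧
        ∀ x : α, A.lev x = b →
          (∃ q : ℚ, g (Sum.inl x) = some q ∧ (n : ℚ) < q) ∨
          (∃ q : ℚ, g (Sum.inr (i x)) = some q ∧ (n : ℚ) < q)) ∧
    -- D_n is open
    (∀ a f b g, IsS2Cond (sumTree A B) a f → IsS2Cond (sumTree A B) b g → a ≤ b →
      (∀ x, f x ≠ none → g x = f x) →
      (∀ x : α, A.lev x = a →
        (∃ q : ℚ, f (Sum.inl x) = some q ∧ (n : ℚ) < q) ∨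
        (∃ q : ℚ, f (Sum.inr (i x)) = some q ∧ (n : ℚ) < q)) →
      (∀ x : α, A.lev x = b →
        (∃ q : ℚ, g (Sum.inl x) = some q ∧ (n : ℚ) < q) ∨
        (∃ q : ℚ, g (Sum.inr (i x)) = some q ∧ (n : ℚ) < q))) := by
  obtain ⟨⟨hAt, -, -, -, hsucc, -⟩, -⟩ := hA
  let e := Equiv.ofBijective i hbij
  have hT : (sumTree A B).IsTree := hAt.sumTree (hAt.map_equiv e hiso hlev)
  refine ⟨fun a f hf => ?_, fun a f b g _ hg hab hfg hfn x hx => ?_⟩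
  · let ρ : α ⊕ β → ℚ := fun u => (f u).getD 0
    obtain ⟨v₁, v₂, h₁, h₂, hlarge⟩ :=
      exists_twin_labelling hAt hsucc a (ρ ∘ Sum.inl) (ρ ∘ Sum.inr ∘ e) n
    have hv := h₁.sumTree (h₂.map_equiv (ρ := ρ ∘ Sum.inr) e hiso hlev)
    rw [Sum.elim_comp_inl_inr] at hv
    refine ⟨a + 1, _, hf.extendSucc hT hv, (lt_add_one a).le, fun _ => hf.1.extendSucc_eq, ?_⟩
    intro x hx
    simpa [extendSucc, sumTree, hx, hlev, e] using hlarge x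
  · obtain ⟨z, hzx, hz⟩ := hAt.exists_le_lev (hx ▸ hab)
    refine (hfn z hz).imp (hg.1.exists_gt_of_extends hfg (w := Sum.inl x) ?_ hx.le)
      (hg.1.exists_gt_of_extends hfg (w := Sum.inr (i x)) ?_ ((hlev x).trans hx).le)
    exacts [hzx.imp (congrArg _) id, hzx.imp (congrArg (Sum.inr ∘ i)) (hiso z x).1]
end
end
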